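/- Let d ≥ 1, let u : ℝ^d × (0,∞) → ℝ be a positive function which is ℤ^d-periodic in the space variable (i.e. u(x + m, t) = u(x,t) for every m ∈ ℤ^d, x ∈ ℝ^d, t > 0), such that f(x,t) = log u(x,t) is differentiable in (x,t), and let α > 0, C₁ ≥ 0, C₂ ≥ 0 be constants such that for all x ∈ ℝ^d and t > 0 one has ‖∇_x f(x,t)‖² − α·∂_t f(x,t) ≤ C₁ + C₂/t. Then for all x, y ∈ ℝ^d and all 0 < t₁ < t₂: u(x,t₁) ≤ u(y,t₂) · (t₂/t₁)^{C₂/α} · exp( α·d/(4(t₂−t₁)) + (C₁/α)(t₂−t₁) ). -/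

import Mathlib

/-!
Along the space-time segment `s ↦ (x + s • w, t₁ + s * τ)` from `(x, t₁)` to `(x', t₂)` the
derivative of `f = log u` is `⟪∇ₓf, w⟫ + τ ∂ₜf`. Cauchy–Schwarz and AM–GM bound `⟪∇ₓf, w⟫`
below by `-(τ/α)‖∇ₓf‖² - α‖w‖²/(4τ)`, and the Li–Yau bound turns `τ ∂ₜf` into
`(τ/α)(‖∇ₓf‖² - C₁ - C₂/t)`, so the gradient terms cancel. Integrating over `s ∈ [0, 1]` gives
`log u(x, t₁) ≤ log u(x', t₂) + (C₂/α) log(t₂/t₁) + α‖x' - x‖²/(4τ) + (C₁/α)τ`. By periodicity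
`y` may be replaced by an integer translate `x'` with `‖x' - x‖² ≤ d`.
-/

open Real InnerProductSpace RealInnerProductSpace

theorem exists_sq_norm_add_intCast_sub_le {ι : Type*} [Fintype ι] (x y : EuclideanSpace ℝ ι) :
    ∃ m : ι → ℤ, ‖y + (EuclideanSpace.equiv ι ℝ).symm (fun i => (m i : ℝ)) - x‖ ^ 2
      ≤ Fintype.card ι := by
  refine ⟨fun i => ⌊x i - y i⌋, ?_⟩
  rw [EuclideanSpace.norm_sq_eq]
  calc _ ≤ ∑ _i : ι, (1 : ℝ) := Finset.sum_le_sum fun i _ => ?_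
    _ = Fintype.card ι := by simp
  have hfract : (y + (EuclideanSpace.equiv ι ℝ).symm (fun i => (⌊x i - y i⌋ : ℝ)) - x) i
      = -Int.fract (x i - y i) := by
    change y i + (⌊x i - y i⌋ : ℝ) - x i = _
    rw [Int.fract]
    ring
  rw [hfract, norm_neg, Real.norm_eq_abs, sq_abs]
  have h0 := Int.fract_nonneg (x i - y i)
  have h1 := Int.fract_lt_one (x i - y i)
  nlinarith

section InnerBound

variable {E : Type*} [NormedAddCommGroup E] [InnerProductSpace ℝ E]

theorem neg_le_inner_add_mul_of_sq_norm_sub_mul_le {g w : E} {a α τ c : ℝ} (hα : 0 < α)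
    (hτ : 0 < τ) (h : ‖g‖ ^ 2 - α * a ≤ c) :
    -(α * ‖w‖ ^ 2 / (4 * τ)) - τ / α * c ≤ ⟪g, w⟫ + τ * a := by
  have hcs : -(‖g‖ * ‖w‖) ≤ ⟪g, w⟫ := neg_le_of_abs_le (abs_real_inner_le_norm g w)
  have hamgm : ‖g‖ * ‖w‖ ≤ τ / α * ‖g‖ ^ 2 + α * ‖w‖ ^ 2 / (4 * τ) := by
    have : 0 ≤ (τ / α) * (‖g‖ - α / (2 * τ) * ‖w‖) ^ 2 := by positivity
    have hsq : (τ / α) * (‖g‖ - α / (2 * τ) * ‖w‖) ^ 2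
        = τ / α * ‖g‖ ^ 2 + α * ‖w‖ ^ 2 / (4 * τ) - ‖g‖ * ‖w‖ := by
      field_simp; ring
    linarith
  have hdt : τ / α * (‖g‖ ^ 2 - c) ≤ τ * a := by
    calc τ / α * (‖g‖ ^ 2 - c) ≤ τ / α * (α * a) := by gcongr; linarith
      _ = τ * a := by field_simp
  nlinarith

end InnerBound

section LiYau

variable {E : Type*} [NormedAddCommGroup E] [InnerProductSpace ℝ E] [CompleteSpace E]

theorem fderiv_prod_apply_eq_inner_gradient_add {f : E × ℝ → ℝ} {z : E} {t : ℝ}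
    (hf : DifferentiableAt ℝ f (z, t)) (w : E) (τ : ℝ) :
    fderiv ℝ f (z, t) (w, τ)
      = ⟪gradient (fun y => f (y, t)) z, w⟫ + τ * deriv (fun r => f (z, r)) t := by
  have hz : HasFDerivAt (fun y => f (y, t)) ((fderiv ℝ f (z, t)).comp (.inl ℝ E ℝ)) z :=
    hf.hasFDerivAt.comp z (hasFDerivAt_prodMk_left z t)
  have ht : HasDerivAt (fun r => f (z, r)) (fderiv ℝ f (z, t) (0, 1)) t :=
    hf.hasFDerivAt.comp_hasDerivAt t ((hasDerivAt_const t z).prodMk (hasDerivAt_id t))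
  rw [inner_gradient_left, hz.fderiv, ht.deriv, ← smul_eq_mul, ← map_smul,
    ContinuousLinearMap.comp_apply, ContinuousLinearMap.inl_apply, ← map_add]
  simp

theorem hasDerivAt_comp_spaceTimeLine {f : E × ℝ → ℝ} {x w : E} {t τ s : ℝ}
    (hf : DifferentiableAt ℝ f (x + s • w, t + s * τ)) :
    HasDerivAt (fun s => f (x + s • w, t + s * τ))
      (⟪gradient (fun y => f (y, t + s * τ)) (x + s • w), w⟫
        + τ * deriv (fun r => f (x + s • w, r)) (t + s * τ)) s := by
  rw [← fderiv_prod_apply_eq_inner_gradient_add hf]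
  refine hf.hasFDerivAt.comp_hasDerivAt s (HasDerivAt.prodMk ?_ ?_)
  · simpa using ((hasDerivAt_id s).smul_const w).const_add x
  · simpa using ((hasDerivAt_id s).mul_const τ).const_add t

theorem harnack_of_liYau {f : E × ℝ → ℝ} {α C₁ C₂ : ℝ} (hα : 0 < α)
    (hf : ∀ x t, 0 < t → DifferentiableAt ℝ f (x, t))
    (hLY : ∀ x t, 0 < t →
      ‖gradient (fun y => f (y, t)) x‖ ^ 2 - α * deriv (fun s => f (x, s)) t ≤ C₁ + C₂ / t)
    {x x' : E} {t₁ t₂ : ℝ} (ht₁ : 0 < t₁) (ht : t₁ < t₂) :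
    f (x, t₁) ≤ f (x', t₂) + C₂ / α * log (t₂ / t₁)
      + (α * ‖x' - x‖ ^ 2 / (4 * (t₂ - t₁)) + C₁ / α * (t₂ - t₁)) := by
  set τ := t₂ - t₁
  set w := x' - x
  have hτ : 0 < τ := sub_pos.mpr ht
  have hpos : ∀ s ∈ Set.Icc (0 : ℝ) 1, 0 < t₁ + s * τ := fun s hs => by nlinarith [hs.1]
  set A := α * ‖w‖ ^ 2 / (4 * τ) + C₁ / α * τ
  set G : ℝ → ℝ := fun s => f (x + s • w, t₁ + s * τ) + A * s + C₂ / α * log (t₁ + s * τ)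
  have hG : ∀ s ∈ Set.Icc (0 : ℝ) 1, ∃ G's, HasDerivAt G G's s ∧ 0 ≤ G's := by
    intro s hs
    have hlog : HasDerivAt (fun s => log (t₁ + s * τ)) (τ / (t₁ + s * τ)) s := by
      simpa using (((hasDerivAt_id s).mul_const τ).const_add t₁).log (hpos s hs).ne'
    refine ⟨_, ((hasDerivAt_comp_spaceTimeLine (hf _ _ (hpos s hs))).add
      ((hasDerivAt_id s).const_mul A)).add (hlog.const_mul (C₂ / α)), ?_⟩
    have hbound := neg_le_inner_add_mul_of_sq_norm_sub_mul_le (w := w) hα hτ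
      (hLY (x + s • w) _ (hpos s hs))
    have hconst :
        τ / α * (C₁ + C₂ / (t₁ + s * τ)) = C₁ / α * τ + C₂ / α * (τ / (t₁ + s * τ)) := by
      field_simp
    simp only [mul_one]
    linarith
  choose! G' hG' hG'_nonneg using hG
  have hmono : MonotoneOn G (Set.Icc 0 1) := by
    refine monotoneOn_of_hasDerivWithinAt_nonneg (f' := G') (convex_Icc 0 1)
      (fun s hs => (hG' s hs).continuousAt.continuousWithinAt) (fun s hs => ?_) (fun s hs => ?_)
    all_goals rw [interior_Icc] at hs
    · exact (hG' s (Set.Ioo_subset_Icc_self hs)).hasDerivWithinAt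
    · exact hG'_nonneg s (Set.Ioo_subset_Icc_self hs)
  have h01 := hmono (by simp) (by simp) zero_le_one
  simp only [G, zero_smul, add_zero, zero_mul, mul_zero, one_smul, one_mul, mul_one, w, τ,
    add_sub_cancel] at h01
  rw [log_div (by linarith) ht₁.ne']
  linarith

end LiYau

theorem stmt_10_general (d : ℕ) (u : EuclideanSpace ℝ (Fin d) → ℝ → ℝ)
    (hu : ∀ x t, 0 < t → 0 < u x t)
    (hper : ∀ (m : Fin d → ℤ) (x : EuclideanSpace ℝ (Fin d)) (t : ℝ), 0 < t →
      u (x + (EuclideanSpace.equiv (Fin d) ℝ).symm (fun i => (m i : ℝ))) t = u x t)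
    (hdiff : ∀ x t, 0 < t →
      DifferentiableAt ℝ
        (fun p : EuclideanSpace ℝ (Fin d) × ℝ => Real.log (u p.1 p.2)) (x, t))
    (α C₁ C₂ : ℝ) (hα : 0 < α)
    (hLiYau : ∀ x t, 0 < t →
      ‖gradient (fun y => Real.log (u y t)) x‖ ^ 2
          - α * deriv (fun s => Real.log (u x s)) t ≤ C₁ + C₂ / t) :
    ∀ x y : EuclideanSpace ℝ (Fin d), ∀ t₁ t₂ : ℝ, 0 < t₁ → t₁ < t₂ →
      u x t₁ ≤ u y t₂ * (t₂ / t₁) ^ (C₂ / α)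
          * Real.exp (α * d / (4 * (t₂ - t₁)) + (C₁ / α) * (t₂ - t₁)) := by
  intro x y t₁ t₂ ht₁ ht
  have ht₂ : 0 < t₂ := ht₁.trans ht
  obtain ⟨m, hm⟩ := exists_sq_norm_add_intCast_sub_le x y
  have hlog := harnack_of_liYau (f := fun p => log (u p.1 p.2)) hα hdiff hLiYau
    (x := x) (x' := y + (EuclideanSpace.equiv (Fin d) ℝ).symm (fun i => (m i : ℝ))) ht₁ ht
  have hdist : α * ‖y + (EuclideanSpace.equiv (Fin d) ℝ).symm (fun i => (m i : ℝ)) - x‖ ^ 2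
      / (4 * (t₂ - t₁)) ≤ α * d / (4 * (t₂ - t₁)) := by
    gcongr
    simpa using hm
  dsimp only at hlog
  rw [hper m y t₂ ht₂] at hlog
  calc u x t₁ = exp (log (u x t₁)) := (exp_log (hu x t₁ ht₁)).symm
    _ ≤ exp (log (u y t₂) + C₂ / α * log (t₂ / t₁)
          + (α * d / (4 * (t₂ - t₁)) + C₁ / α * (t₂ - t₁))) := exp_le_exp.mpr (by linarith)
    _ = _ := by
      rw [exp_add, exp_add, exp_log (hu y t₂ ht₂), rpow_def_of_pos (by positivity),
        mul_comm (log _)]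

/-- Periodic (compact) form of the Harnack inequality: if `u > 0` is `ℤ^d`-periodic in
space, `f = log u` is differentiable in `(x,t)` for `t > 0`, and
`‖∇ₓf‖² − α ∂ₜf ≤ C₁ + C₂/t`, then for `0 < t₁ < t₂`,
`u(x,t₁) ≤ u(y,t₂) (t₂/t₁)^{C₂/α} exp(αd/(4(t₂−t₁)) + (C₁/α)(t₂−t₁))`. -/
theorem stmt_10 (d : ℕ) (hd : 1 ≤ d) (u : EuclideanSpace ℝ (Fin d) → ℝ → ℝ)
    (hu : ∀ x t, 0 < t → 0 < u x t)
    (hper : ∀ (m : Fin d → ℤ) (x : EuclideanSpace ℝ (Fin d)) (t : ℝ), 0 < t →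
      u (x + (EuclideanSpace.equiv (Fin d) ℝ).symm (fun i => (m i : ℝ))) t = u x t)
    (hdiff : ∀ x t, 0 < t →
      DifferentiableAt ℝ
        (fun p : EuclideanSpace ℝ (Fin d) × ℝ => Real.log (u p.1 p.2)) (x, t))
    (α C₁ C₂ : ℝ) (hα : 0 < α) (hC₁ : 0 ≤ C₁) (hC₂ : 0 ≤ C₂)
    (hLiYau : ∀ x t, 0 < t →
      ‖gradient (fun y => Real.log (u y t)) x‖ ^ 2
          - α * deriv (fun s => Real.log (u x s)) t ≤ C₁ + C₂ / t) :
    ∀ x y : EuclideanSpace ℝ (Fin d), ∀ t₁ t₂ : ℝ, 0 < t₁ → t₁ < t₂ →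
      u x t₁ ≤ u y t₂ * (t₂ / t₁) ^ (C₂ / α)
          * Real.exp (α * d / (4 * (t₂ - t₁)) + (C₁ / α) * (t₂ - t₁)) :=
  stmt_10_general d u hu hper hdiff α C₁ C₂ hα hLiYau
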